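/- arXiv:2201.05347 — 5 statements merged into one kernel-verified Lean document; each statement's English description precedes it below -/
import Mathlib

section
/- For α ∈ (0, 1/2), the function f with f'(r) = ((1 + ((1-2α)/(2α))·r²)^{2α/(1-2α)} - 1)^{1/2} satisfies f(r)/r^{1/(1-2α)} → (1-2α)·((1-2α)/(2α))^{α/(1-2α)} as r → ∞. -/
/-!
With `p = 1/(1-2α)`, `q = p - 1 = 2α/(1-2α)` and `β = (1-2α)/(2α)`, the derivative satisfies
`f'(r) ~ β^{q/2} r^q = β^{q/2} (r^p)'/p`. An `∞/∞` form of l'Hôpital's rule, in which only the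
denominator has to tend to infinity, transfers the limit `β^{q/2}/p = (1-2α) β^{α/(1-2α)}` of
`f'(r)/(r^p)'` to `f(r)/r^p`.
-/

open Filter Topology

lemma sub_le_mul_sub_of_hasDerivAt_le {g φ g' φ' : ℝ → ℝ} {c T : ℝ}
    (hg : ∀ x ≥ T, HasDerivAt g (g' x) x) (hφ : ∀ x ≥ T, HasDerivAt φ (φ' x) x)
    (hle : ∀ x ≥ T, g' x ≤ c * φ' x) {r : ℝ} (hr : T ≤ r) :
    g r - g T ≤ c * (φ r - φ T) := by
  have hderiv (x : ℝ) (hx : x ≥ T) : HasDerivAt (fun y => c * φ y - g y) (c * φ' x - g' x) x :=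
    ((hφ x hx).const_mul c).sub (hg x hx)
  have hmono : MonotoneOn (fun y => c * φ y - g y) (Set.Ici T) :=
    monotoneOn_of_hasDerivWithinAt_nonneg (convex_Ici T)
      (fun x hx => (hderiv x hx).continuousAt.continuousWithinAt)
      (fun x hx => (hderiv x (interior_subset hx)).hasDerivWithinAt)
      (fun x hx => sub_nonneg.2 (hle x (interior_subset hx)))
  have := hmono Set.self_mem_Ici hr hr
  linarith

lemma eventually_div_lt_of_deriv_le {g φ g' φ' : ℝ → ℝ} {c c' : ℝ}
    (hg : ∀ᶠ x in atTop, HasDerivAt g (g' x) x) (hφ : ∀ᶠ x in atTop, HasDerivAt φ (φ' x) x)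
    (hφ_top : Tendsto φ atTop atTop) (hle : ∀ᶠ x in atTop, g' x ≤ c * φ' x) (hc : c < c') :
    ∀ᶠ x in atTop, g x / φ x < c' := by
  obtain ⟨T, hT⟩ := eventually_atTop.1 (hg.and (hφ.and hle))
  have hrem : Tendsto (fun x => c + (g T - c * φ T) / φ x) atTop (𝓝 c) := by
    simpa using tendsto_const_nhds.add (tendsto_const_nhds.div_atTop hφ_top)
  filter_upwards [hrem.eventually_lt_const hc, eventually_ge_atTop T,
    hφ_top.eventually_gt_atTop 0] with x hx hxT hφx
  have hsub := sub_le_mul_sub_of_hasDerivAt_le (fun y hy => (hT y hy).1)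
    (fun y hy => (hT y hy).2.1) (fun y hy => (hT y hy).2.2) hxT
  calc g x / φ x = c + (g x - c * φ x) / φ x := by field_simp; ring
    _ ≤ c + (g T - c * φ T) / φ x := by
      have : g x - c * φ x ≤ g T - c * φ T := by linarith [mul_sub c (φ x) (φ T)]
      gcongr
    _ < c' := hx

theorem lhopital_atTop_of_tendsto_atTop {g φ g' φ' : ℝ → ℝ} {L : ℝ}
    (hg : ∀ᶠ x in atTop, HasDerivAt g (g' x) x) (hφ : ∀ᶠ x in atTop, HasDerivAt φ (φ' x) x)
    (hφ' : ∀ᶠ x in atTop, 0 < φ' x) (hφ_top : Tendsto φ atTop atTop)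
    (h : Tendsto (fun x => g' x / φ' x) atTop (𝓝 L)) :
    Tendsto (fun x => g x / φ x) atTop (𝓝 L) := by
  refine tendsto_order.2 ⟨fun c' hc' => ?_, fun c' hc' => ?_⟩
  · obtain ⟨c, hc'c, hcL⟩ := exists_between hc'
    have hle : ∀ᶠ x in atTop, -g' x ≤ -c * φ' x := by
      filter_upwards [h.eventually_const_lt hcL, hφ'] with x hx hpos
      linarith [(lt_div_iff₀ hpos).1 hx]
    filter_upwards [eventually_div_lt_of_deriv_le (hg.mono fun x hx => hx.neg) hφ hφ_top hle
      (neg_lt_neg hc'c)] with x hx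
    rw [Pi.neg_apply, neg_div] at hx
    linarith
  · obtain ⟨c, hLc, hcc'⟩ := exists_between hc'
    refine eventually_div_lt_of_deriv_le hg hφ hφ_top ?_ hcc'
    filter_upwards [h.eventually_lt_const hLc, hφ'] with x hx hpos
    exact ((div_lt_iff₀ hpos).1 hx).le

lemma tendsto_rpow_one_add_mul_sq_sub_one_div_rpow {β q : ℝ} (hβ : 0 < β) (hq : 0 < q) :
    Tendsto (fun r : ℝ => ((1 + β * r ^ 2) ^ q - 1) ^ ((1 : ℝ) / 2) / r ^ q) atTop
      (𝓝 (β ^ (q / 2))) := by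
  set F : ℝ → ℝ := fun x => ((β + x) ^ q - x ^ q) ^ ((1 : ℝ) / 2)
  have hF : ContinuousAt F 0 :=
    (((continuous_const.add continuous_id).continuousAt.rpow_const (Or.inl (by simpa using hβ.ne'))).sub
      (Real.continuousAt_rpow_const 0 q (Or.inr hq.le))).rpow_const (Or.inr (by norm_num))
  have hF0 : F 0 = β ^ (q / 2) := by
    simp only [F, add_zero, Real.zero_rpow hq.ne', sub_zero, ← Real.rpow_mul hβ.le]
    ring_nf
  have hinv : Tendsto (fun r : ℝ => r⁻¹ ^ 2) atTop (𝓝 0) := by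
    simpa using (tendsto_inv_atTop_zero (𝕜 := ℝ)).pow 2
  rw [← hF0]
  refine (hF.tendsto.comp hinv).congr' ?_
  filter_upwards [eventually_gt_atTop 0] with r hr
  have hr2 : (0 : ℝ) < r ^ 2 := by positivity
  have hbase : (1 : ℝ) ≤ (1 + β * r ^ 2) ^ q := Real.one_le_rpow (by nlinarith) hq.le
  have hβr : β + r⁻¹ ^ 2 = (1 + β * r ^ 2) / r ^ 2 := by field_simp; ring
  have hsq : ((r ^ 2 : ℝ) ^ q) ^ ((1 : ℝ) / 2) = r ^ q := by
    rw [← Real.rpow_natCast r 2, ← Real.rpow_mul hr.le, ← Real.rpow_mul hr.le]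
    ring_nf
  simp only [Function.comp_apply, F]
  rw [hβr, inv_pow, ← one_div, Real.div_rpow (by positivity) hr2.le,
    Real.div_rpow zero_le_one hr2.le, Real.one_rpow, div_sub_div_same,
    Real.div_rpow (by linarith) (by positivity), hsq]

theorem stmt_5_general (α : ℝ) (hα : α ∈ Set.Ioo (0 : ℝ) (1 / 2)) (f : ℝ → ℝ)
    (hf : ∀ r > (0 : ℝ), HasDerivAt f
      (((1 + (1 - 2 * α) / (2 * α) * r ^ 2) ^ (2 * α / (1 - 2 * α)) - 1) ^ ((1 : ℝ) / 2)) r) :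
    Tendsto (fun r => f r / r ^ ((1 : ℝ) / (1 - 2 * α))) atTop
      (nhds ((1 - 2 * α) * ((1 - 2 * α) / (2 * α)) ^ (α / (1 - 2 * α)))) := by
  obtain ⟨hα0, hα2⟩ := hα
  have h12 : 0 < 1 - 2 * α := by linarith
  set p := 1 / (1 - 2 * α) with hp_def
  have hp : 0 < p := by positivity
  have hp1 : p - 1 = 2 * α / (1 - 2 * α) := by rw [hp_def]; field_simp; ring
  have hlim := (tendsto_rpow_one_add_mul_sq_sub_one_div_rpow (β := (1 - 2 * α) / (2 * α))
    (by positivity) (by positivity : 0 < 2 * α / (1 - 2 * α))).div_const p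
  have hL : ((1 - 2 * α) / (2 * α)) ^ (2 * α / (1 - 2 * α) / 2) / p
      = (1 - 2 * α) * ((1 - 2 * α) / (2 * α)) ^ (α / (1 - 2 * α)) := by
    rw [hp_def, div_div_eq_mul_div, div_one, mul_comm]
    ring_nf
  rw [hL] at hlim
  refine lhopital_atTop_of_tendsto_atTop (φ' := fun r => p * r ^ (2 * α / (1 - 2 * α)))
    ((eventually_gt_atTop 0).mono hf) ((eventually_gt_atTop 0).mono fun r hr => ?_)
    ((eventually_gt_atTop 0).mono fun r hr => by positivity) (tendsto_rpow_atTop hp)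
    (hlim.congr fun r => by ring)
  simpa [hp1] using Real.hasDerivAt_rpow_const (p := p) (Or.inl hr.ne')

/-- Asymptotic behaviour of the rotational `K^α`-translator meeting the axis,
`α ∈ (0, 1/2)`:  `f(r)/r^{1/(1-2α)} → (1-2α)((1-2α)/(2α))^{α/(1-2α)}`. -/
theorem stmt_5 (α : ℝ) (hα : α ∈ Set.Ioo (0 : ℝ) (1 / 2)) (f : ℝ → ℝ)
    (hf0 : f 0 = 0)
    (hf : ∀ r > (0 : ℝ), HasDerivAt f
      (((1 + (1 - 2 * α) / (2 * α) * r ^ 2) ^ (2 * α / (1 - 2 * α)) - 1) ^ ((1 : ℝ) / 2)) r) :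
    Tendsto (fun r => f r / r ^ ((1 : ℝ) / (1 - 2 * α))) atTop
      (nhds ((1 - 2 * α) * ((1 - 2 * α) / (2 * α)) ^ (α / (1 - 2 * α)))) :=
  stmt_5_general α hα f hf
end

section
/- If a rotational surface about the z-axis parametrized by X(r,θ) = (r cos θ, r sin θ, f(r)) satisfies K^α = ⟨N, v⟩ for a unit vector v = (v₁,v₂,v₃) and all (r,θ), and f' is not identically zero, then v₁ = v₂ = 0, i.e., v is parallel to the rotation axis. -/
/-- If a rotational surface about the `z`-axis is a `K^α`-translator with unit speed
`v = (v₁,v₂,v₃)` and `f'` is not identically zero, then `v₁ = v₂ = 0`. -/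
theorem stmt_6 (α v₁ v₂ v₃ : ℝ) (hα : α ≠ 0) (hv : v₁ ^ 2 + v₂ ^ 2 + v₃ ^ 2 = 1)
    (I : Set ℝ) (hI : I ⊆ Set.Ioi 0) (f : ℝ → ℝ) (hf : ContDiff ℝ (⊤ : ℕ∞) f)
    (hne : ∃ r ∈ I, deriv f r ≠ 0)
    (heq : ∀ r ∈ I, ∀ θ : ℝ,
      ((deriv f r * deriv (deriv f) r) / (r * (1 + (deriv f r) ^ 2) ^ 2)) ^ α
        = (1 / Real.sqrt (1 + (deriv f r) ^ 2))
            * (-v₁ * deriv f r * Real.cos θ - v₂ * deriv f r * Real.sin θ + v₃)) :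
    v₁ = 0 ∧ v₂ = 0 := by
  obtain ⟨r, hr, hfr⟩ := hne
  have hpos : (0:ℝ) < 1 + (deriv f r) ^ 2 := by positivity
  have hs : Real.sqrt (1 + (deriv f r) ^ 2) ≠ 0 := by
    positivity
  have hc : (1 / Real.sqrt (1 + (deriv f r) ^ 2)) ≠ 0 := by
    simpa using hs
  have h0 := heq r hr 0
  have hπ := heq r hr Real.pi
  have h2 := heq r hr (Real.pi / 2)
  have h2' := heq r hr (-(Real.pi / 2))
  rw [Real.cos_zero, Real.sin_zero] at h0
  rw [Real.cos_pi, Real.sin_pi] at hπ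
  rw [Real.cos_pi_div_two, Real.sin_pi_div_two] at h2
  rw [Real.cos_neg, Real.sin_neg, Real.cos_pi_div_two, Real.sin_pi_div_two] at h2'
  have e1 : (1 / Real.sqrt (1 + (deriv f r) ^ 2)) * (-v₁ * deriv f r * 1 - v₂ * deriv f r * 0 + v₃)
      = (1 / Real.sqrt (1 + (deriv f r) ^ 2)) * (-v₁ * deriv f r * (-1) - v₂ * deriv f r * 0 + v₃) :=
    h0 ▸ hπ
  have e2 : (1 / Real.sqrt (1 + (deriv f r) ^ 2)) * (-v₁ * deriv f r * 0 - v₂ * deriv f r * 1 + v₃)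
      = (1 / Real.sqrt (1 + (deriv f r) ^ 2)) * (-v₁ * deriv f r * 0 - v₂ * deriv f r * (-1) + v₃) :=
    h2 ▸ h2'
  have hv1 : v₁ * deriv f r = 0 := by
    have := mul_left_cancel₀ hc e1
    linarith
  have hv2 : v₂ * deriv f r = 0 := by
    have := mul_left_cancel₀ hc e2
    linarith
  exact ⟨by rcases mul_eq_zero.mp hv1 with h | h; exact h; exact absurd h hfr,
         by rcases mul_eq_zero.mp hv2 with h | h; exact h; exact absurd h hfr⟩
end

section
/- Let g(r) = r²(1+f'(r)²) + h². The helicoidal translator equation ((r³f'f'' - h²)/g²)^α = r/√g is equivalent to r·g' = 2g + 2·r^{1/α}·g^{(4α-1)/(2α)}, using (r/2)·g' = g + r³f'f'' - h². -/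
/-- With `g(r) = r²(1+f'²)+h²`, the identity `(r/2)g' = g + r³f'f'' - h²` holds, and the
helicoidal translator equation `((r³f'f''-h²)/g²)^α = r/√g` is equivalent to
`r g' = 2g + 2 r^{1/α} g^{(4α-1)/(2α)}`. -/
theorem stmt_9 (α h : ℝ) (hα : α ≠ 0) (f : ℝ → ℝ) (hf : ContDiff ℝ (⊤ : ℕ∞) f)
    (r : ℝ) (hr : 0 < r)
    (hg : 0 < r ^ 2 * (1 + (deriv f r) ^ 2) + h ^ 2)
    (hK : 0 < r ^ 3 * deriv f r * deriv (deriv f) r - h ^ 2) :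
    ((r / 2) * deriv (fun r => r ^ 2 * (1 + (deriv f r) ^ 2) + h ^ 2) r
        = (r ^ 2 * (1 + (deriv f r) ^ 2) + h ^ 2)
          + r ^ 3 * deriv f r * deriv (deriv f) r - h ^ 2)
    ∧ (((r ^ 3 * deriv f r * deriv (deriv f) r - h ^ 2)
          / (r ^ 2 * (1 + (deriv f r) ^ 2) + h ^ 2) ^ 2) ^ α
        = r / Real.sqrt (r ^ 2 * (1 + (deriv f r) ^ 2) + h ^ 2)
      ↔ r * deriv (fun r => r ^ 2 * (1 + (deriv f r) ^ 2) + h ^ 2) r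
          = 2 * (r ^ 2 * (1 + (deriv f r) ^ 2) + h ^ 2)
            + 2 * r ^ (1 / α)
              * (r ^ 2 * (1 + (deriv f r) ^ 2) + h ^ 2) ^ ((4 * α - 1) / (2 * α))) := by
  set F := deriv f r with hFdef
  set F' := deriv (deriv f) r with hF'def
  set G := r ^ 2 * (1 + F ^ 2) + h ^ 2 with hGdef
  set K := r ^ 3 * F * F' - h ^ 2 with hKdef
  -- derivative computation
  have hFc : Differentiable ℝ (deriv f) :=
    ((contDiff_infty_iff_deriv.mp (hf.of_le (by simp))).2).differentiable (by simp)
  have hF : HasDerivAt (deriv f) F' r := (hFc r).hasDerivAt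
  have h1 : HasDerivAt (fun r : ℝ => r ^ 2) (2 * r) r := by
    simpa using hasDerivAt_pow 2 r
  have h2 : HasDerivAt (fun r => 1 + (deriv f r) ^ 2) (2 * F * F') r := by
    exact ((hasDerivAt_const r (1 : ℝ)).add (hF.pow 2)).congr_deriv (by norm_num [hFdef])
  have hD : HasDerivAt (fun r => r ^ 2 * (1 + (deriv f r) ^ 2) + h ^ 2)
      (2 * r * (1 + F ^ 2) + r ^ 2 * (2 * F * F')) r :=
    (h1.mul h2).add_const (h ^ 2)
  have hDeq : deriv (fun r => r ^ 2 * (1 + (deriv f r) ^ 2) + h ^ 2) r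
      = 2 * r * (1 + F ^ 2) + r ^ 2 * (2 * F * F') := hD.deriv
  constructor
  · rw [hDeq]; ring
  · rw [hDeq]
    have hident : r * (2 * r * (1 + F ^ 2) + r ^ 2 * (2 * F * F')) = 2 * G + 2 * K := by
      rw [hGdef, hKdef]; ring
    rw [hident]
    have hGK : K / G ^ 2 ≠ 0 ∧ (0:ℝ) ≤ K / G ^ 2 :=
      ⟨by positivity, by positivity⟩
    have hsq : Real.sqrt G = G ^ ((1:ℝ)/2) := Real.sqrt_eq_rpow G
    have hrs : (0:ℝ) ≤ r / Real.sqrt G := by positivity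
    have step1 : (K / G ^ 2) ^ α = r / Real.sqrt G ↔
        K / G ^ 2 = (r / Real.sqrt G) ^ (1/α) := by
      rw [one_div]
      constructor
      · intro hh
        rw [← hh, Real.rpow_rpow_inv hGK.2 hα]
      · intro hh
        rw [hh, Real.rpow_inv_rpow hrs hα]
    rw [step1]
    have hGpos : (0:ℝ) < G := hg
    have hval : (r / Real.sqrt G) ^ (1/α)
        = r ^ (1/α) * G ^ (-(1 / (2*α))) := by
      rw [hsq, div_eq_mul_inv, ← Real.rpow_neg hGpos.le,
        Real.mul_rpow hr.le (Real.rpow_nonneg hGpos.le _),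
        ← Real.rpow_mul hGpos.le]
      congr 1
      field_simp
    rw [hval]
    have hG2 : (G:ℝ) ^ 2 ≠ 0 := by positivity
    rw [div_eq_iff hG2]
    have hexp : r ^ (1/α) * G ^ (-(1 / (2*α))) * G ^ 2
        = r ^ (1/α) * G ^ ((4*α - 1)/(2*α)) := by
      have h2' : (G:ℝ) ^ (2:ℕ) = G ^ ((2:ℕ):ℝ) := (Real.rpow_natCast G 2).symm
      rw [h2', mul_assoc, ← Real.rpow_add hGpos]
      congr 2
      push_cast
      field_simp
      ring
    rw [hexp]
    constructor
    · intro hh; linarith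
    · intro hh; linarith
end

section
/- Let f, g be smooth real functions of one variable satisfying (f''(x)·g''(y))^{1/4} = v₃ - v₁f'(x) - v₂g'(y) for all x, y, with f''·g'' > 0 everywhere. If f''' and g''' are the third derivatives, then f'''(x)·g'''(y) is forced to vanish identically; consequently at least one of f'', g'' is constant on some interval. -/
open scoped ContDiff

private lemma smooth_chain {f : ℝ → ℝ} (hf : ContDiff ℝ (⊤ : ℕ∞) f) :
    (∀ x, HasDerivAt (deriv f) (deriv (deriv f) x) x) ∧
      (∀ x, HasDerivAt (deriv (deriv f)) (deriv (deriv (deriv f)) x) x) := by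
  have h1 : ContDiff ℝ ∞ (deriv f) := (contDiff_infty_iff_deriv.mp (hf.of_le le_rfl)).2
  have h2 : ContDiff ℝ ∞ (deriv (deriv f)) := (contDiff_infty_iff_deriv.mp h1).2
  have d1 : Differentiable ℝ (deriv f) := h1.differentiable (by simp)
  have d2 : Differentiable ℝ (deriv (deriv f)) := h2.differentiable (by simp)
  exact ⟨fun x => (d1 x).hasDerivAt, fun x => (d2 x).hasDerivAt⟩

/-- If `(f''g'')^{1/4} = v₃ - v₁f' - v₂g' > 0` holds on `I × J` with `f''g'' > 0`, then
`f'''(x)·g'''(y) = 0` for all `(x,y) ∈ I × J`; hence `f''' ≡ 0` on `I` or `g''' ≡ 0` on `J`. -/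
theorem stmt_15 (f g : ℝ → ℝ) (v₁ v₂ v₃ : ℝ) (I J : Set ℝ)
    (hIopen : IsOpen I) (hJopen : IsOpen J)
    (hf : ContDiff ℝ (⊤ : ℕ∞) f) (hg : ContDiff ℝ (⊤ : ℕ∞) g)
    (hpos : ∀ x ∈ I, ∀ y ∈ J, 0 < deriv (deriv f) x * deriv (deriv g) y)
    (hrhs : ∀ x ∈ I, ∀ y ∈ J, 0 < v₃ - v₁ * deriv f x - v₂ * deriv g y)
    (heq : ∀ x ∈ I, ∀ y ∈ J,
      (deriv (deriv f) x * deriv (deriv g) y) ^ ((1 : ℝ) / 4)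
        = v₃ - v₁ * deriv f x - v₂ * deriv g y) :
    (∀ x ∈ I, ∀ y ∈ J, deriv (deriv (deriv f)) x * deriv (deriv (deriv g)) y = 0)
    ∧ ((∀ x ∈ I, deriv (deriv (deriv f)) x = 0)
        ∨ (∀ y ∈ J, deriv (deriv (deriv g)) y = 0)) := by
  classical
  set F1 := deriv f
  set F2 := deriv (deriv f)
  set F3 := deriv (deriv (deriv f))
  set G1 := deriv g
  set G2 := deriv (deriv g)
  set G3 := deriv (deriv (deriv g))
  obtain ⟨hF1', hF2'⟩ := smooth_chain hf
  obtain ⟨hG1', hG2'⟩ := smooth_chain hg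
  -- the fourth-power form of the equation
  have hpow : ∀ x ∈ I, ∀ y ∈ J,
      F2 x * G2 y = (v₃ - v₁ * F1 x - v₂ * G1 y) ^ 4 := by
    intro x hx y hy
    have h := heq x hx y hy
    have ha : (0:ℝ) < F2 x * G2 y := hpos x hx y hy
    calc F2 x * G2 y = ((F2 x * G2 y) ^ ((1:ℝ)/4)) ^ (4:ℕ) := by
          rw [← Real.rpow_natCast ((F2 x * G2 y) ^ ((1:ℝ)/4)) 4,
            ← Real.rpow_mul ha.le]
          norm_num
      _ = (v₃ - v₁ * F1 x - v₂ * G1 y) ^ 4 := by rw [h]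
  -- Step A: differentiate in x
  have hA : ∀ x ∈ I, ∀ y ∈ J,
      F3 x * G2 y = 4 * (v₃ - v₁ * F1 x - v₂ * G1 y) ^ 3 * (-(v₁ * F2 x)) := by
    intro x hx y hy
    have hu : HasDerivAt (fun t => F2 t * G2 y) (F3 x * G2 y) x :=
      (hF2' x).mul_const _
    have hinner : HasDerivAt (fun t => v₃ - v₁ * F1 t - v₂ * G1 y)
        (-(v₁ * F2 x)) x := by
      have := ((hasDerivAt_const x v₃).sub ((hF1' x).const_mul v₁)).sub_const (v₂ * G1 y)
      simpa using this
    have hw : HasDerivAt (fun t => (v₃ - v₁ * F1 t - v₂ * G1 y) ^ 4)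
        (4 * (v₃ - v₁ * F1 x - v₂ * G1 y) ^ 3 * (-(v₁ * F2 x))) x := by
      simpa using hinner.fun_pow 4
    have hev : (fun t => F2 t * G2 y) =ᶠ[nhds x]
        (fun t => (v₃ - v₁ * F1 t - v₂ * G1 y) ^ 4) := by
      filter_upwards [hIopen.mem_nhds hx] with t ht using hpow t ht y hy
    exact hu.unique (hw.congr_of_eventuallyEq hev)
  -- Step B: differentiate in y
  have hB : ∀ x ∈ I, ∀ y ∈ J,
      F2 x * G3 y = 4 * (v₃ - v₁ * F1 x - v₂ * G1 y) ^ 3 * (-(v₂ * G2 y)) := by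
    intro x hx y hy
    have hu : HasDerivAt (fun t => F2 x * G2 t) (F2 x * G3 y) y :=
      (hG2' y).const_mul _
    have hinner : HasDerivAt (fun t => v₃ - v₁ * F1 x - v₂ * G1 t)
        (-(v₂ * G2 y)) y := by
      have := (hasDerivAt_const y (v₃ - v₁ * F1 x)).fun_sub ((hG1' y).const_mul v₂)
      simpa using this
    have hw : HasDerivAt (fun t => (v₃ - v₁ * F1 x - v₂ * G1 t) ^ 4)
        (4 * (v₃ - v₁ * F1 x - v₂ * G1 y) ^ 3 * (-(v₂ * G2 y))) y := by
      simpa using hinner.fun_pow 4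
    have hev : (fun t => F2 x * G2 t) =ᶠ[nhds y]
        (fun t => (v₃ - v₁ * F1 x - v₂ * G1 t) ^ 4) := by
      filter_upwards [hJopen.mem_nhds hy] with t ht using hpow x hx t ht
    exact hu.unique (hw.congr_of_eventuallyEq hev)
  -- Step C: differentiate step A in y
  have hC : ∀ x ∈ I, ∀ y ∈ J,
      F3 x * G3 y = 4 * (3 * (v₃ - v₁ * F1 x - v₂ * G1 y) ^ 2 * (-(v₂ * G2 y)))
        * (-(v₁ * F2 x)) := by
    intro x hx y hy
    have hu : HasDerivAt (fun t => F3 x * G2 t) (F3 x * G3 y) y :=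
      (hG2' y).const_mul _
    have hinner : HasDerivAt (fun t => v₃ - v₁ * F1 x - v₂ * G1 t)
        (-(v₂ * G2 y)) y := by
      have := (hasDerivAt_const y (v₃ - v₁ * F1 x)).fun_sub ((hG1' y).const_mul v₂)
      simpa using this
    have hcube : HasDerivAt (fun t => (v₃ - v₁ * F1 x - v₂ * G1 t) ^ 3)
        (3 * (v₃ - v₁ * F1 x - v₂ * G1 y) ^ 2 * (-(v₂ * G2 y))) y := by
      simpa using hinner.fun_pow 3
    have hw : HasDerivAt
        (fun t => 4 * (v₃ - v₁ * F1 x - v₂ * G1 t) ^ 3 * (-(v₁ * F2 x)))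
        (4 * (3 * (v₃ - v₁ * F1 x - v₂ * G1 y) ^ 2 * (-(v₂ * G2 y)))
          * (-(v₁ * F2 x))) y := by
      have := (hcube.const_mul 4).mul_const (-(v₁ * F2 x))
      simpa [mul_assoc, mul_comm, mul_left_comm] using this
    have hev : (fun t => F3 x * G2 t) =ᶠ[nhds y]
        (fun t => 4 * (v₃ - v₁ * F1 x - v₂ * G1 t) ^ 3 * (-(v₁ * F2 x))) := by
      filter_upwards [hJopen.mem_nhds hy] with t ht using hA x hx t ht
    exact hu.unique (hw.congr_of_eventuallyEq hev)
  -- main vanishing claim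
  have main : ∀ x ∈ I, ∀ y ∈ J, F3 x * G3 y = 0 := by
    intro x hx y hy
    set r := v₃ - v₁ * F1 x - v₂ * G1 y with hr
    have hrpos : 0 < r := hrhs x hx y hy
    have hab : F2 x * G2 y = r ^ 4 := hpow x hx y hy
    have ha := hA x hx y hy
    have hb := hB x hx y hy
    have hc := hC x hx y hy
    rw [← hr] at ha hb hc
    have h1 : F3 x * G3 y * r ^ 4 = 16 * (v₁ * v₂) * r ^ 6 * r ^ 4 := by
      have key : (F3 x * G2 y) * (F2 x * G3 y)
          = (4 * r ^ 3 * (-(v₁ * F2 x))) * (4 * r ^ 3 * (-(v₂ * G2 y))) := by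
        rw [ha, hb]
      linear_combination key - (F3 x * G3 y - 16 * (v₁ * v₂) * r ^ 6) * hab
    have h2 : F3 x * G3 y = 12 * (v₁ * v₂) * r ^ 6 := by
      rw [hc]; linear_combination (12 * (v₁ * v₂) * r ^ 2) * hab
    have hr4 : (0:ℝ) < r ^ 4 := by positivity
    have h1' : F3 x * G3 y = 16 * (v₁ * v₂) * r ^ 6 :=
      mul_right_cancel₀ (ne_of_gt hr4) h1
    have hX : (v₁ * v₂) * r ^ 6 = 0 := by linarith
    rw [h2]; linear_combination 12 * hX
  refine ⟨main, ?_⟩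
  by_cases hall : ∀ x ∈ I, F3 x = 0
  · exact Or.inl hall
  · push_neg at hall
    obtain ⟨x₀, hx₀, hne⟩ := hall
    refine Or.inr fun y hy => ?_
    have := main x₀ hx₀ y hy
    exact (mul_eq_zero.mp this).resolve_left hne
end

section
/- There are no ruled K^α-translators (for non-cylindrical, non-developable ruled surfaces): if λ: I → ℝ is nowhere zero, w'(s) ≠ 0, and the identity -(-1)^α λ(s)^{2α}|w'(s)| + λ(s)⟨w'(s),v⟩(λ(s)²+t²)^{(4α-1)/2} + (w'(s),w(s),v)·t·(λ(s)²+t²)^{(4α-1)/2} = 0 holds for all t ∈ ℝ and s ∈ I with α an integer, α ≠ 1/4 (automatic), then -(-1)^α λ^{2α}|w'| = 0, a contradiction. -/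
/-!
Evaluating at `t = 1` and `t = -1` and adding cancels the odd term `C t P(t)`, where
`P(t) = (l² + t²)^((4α-1)/2)`; comparing with `t = 0` gives `B (P(1) - P(0)) = 0`. Since `α` is an
integer the exponent is nonzero, so `x ↦ x ^ e` is injective on `[0, ∞)` and `P(1) ≠ P(0)`. Hence
`B = 0` and then `A = 0`.
-/

lemma eq_zero_of_forall_add_mul_add_mul_mul_eq_zero {f : ℝ → ℝ} (hf : Function.Even f)
    (hf₀₁ : f 0 ≠ f 1) {A B C : ℝ} (h : ∀ t, A + B * f t + C * t * f t = 0) : A = 0 := by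
  have h₀ : A + B * f 0 = 0 := by simpa using h 0
  have h₁ : A + B * f 1 = 0 := by
    have hneg := h (-1)
    rw [hf] at hneg
    linarith [h 1]
  have hB : B = 0 := by
    have : B * (f 0 - f 1) = 0 := by linarith
    simpa [sub_ne_zero.mpr hf₀₁] using this
  simpa [hB] using h₀

lemma even_rpow_sq_add_sq (l e : ℝ) : Function.Even fun t : ℝ => (l ^ 2 + t ^ 2) ^ e := by
  intro t
  simp only [neg_sq]

lemma rpow_sq_add_zero_sq_ne_rpow_sq_add_one_sq (l : ℝ) {e : ℝ} (he : e ≠ 0) :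
    (l ^ 2 + 0 ^ 2) ^ e ≠ (l ^ 2 + 1 ^ 2) ^ e := by
  intro heq
  have := Real.rpow_left_injOn he (by positivity : (0 : ℝ) ≤ l ^ 2 + 0 ^ 2)
    (by positivity : (0 : ℝ) ≤ l ^ 2 + 1 ^ 2) heq
  norm_num at this

lemma int_four_mul_sub_one_div_two_ne_zero (α : ℤ) : (4 * (α : ℝ) - 1) / 2 ≠ 0 := by
  intro h
  have : 4 * α = 1 := by exact_mod_cast (by linarith : 4 * (α : ℝ) = 1)
  omega

theorem stmt_17_general (α : ℤ) (l A B C : ℝ) (hA : A ≠ 0)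
    (h : ∀ t : ℝ,
      A + B * (l ^ 2 + t ^ 2) ^ ((4 * (α : ℝ) - 1) / 2)
        + C * t * (l ^ 2 + t ^ 2) ^ ((4 * (α : ℝ) - 1) / 2) = 0) :
    False :=
  hA <| eq_zero_of_forall_add_mul_add_mul_mul_eq_zero (even_rpow_sq_add_sq l _)
    (rpow_sq_add_zero_sq_ne_rpow_sq_add_one_sq l (int_four_mul_sub_one_div_two_ne_zero α)) h

/-- There are no ruled `K^α`-translators: the identity
`A + B(l²+t²)^{(4α-1)/2} + C t (l²+t²)^{(4α-1)/2} = 0` for all `t`, with `A ≠ 0`, `l ≠ 0`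
and `α` a nonzero integer, is impossible. -/
theorem stmt_17 (α : ℤ) (hα : α ≠ 0) (l A B C : ℝ) (hl : l ≠ 0) (hA : A ≠ 0)
    (h : ∀ t : ℝ,
      A + B * (l ^ 2 + t ^ 2) ^ ((4 * (α : ℝ) - 1) / 2)
        + C * t * (l ^ 2 + t ^ 2) ^ ((4 * (α : ℝ) - 1) / 2) = 0) :
    False :=
  stmt_17_general α l A B C hA h
end
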